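/- arXiv:2409.12770 — 7 statements merged into one kernel-verified Lean document; each statement's English description precedes it below -/
import Mathlib

section
/- For all simple graphs H₁ and H₂, the Ramsey number satisfies R(H₁, K₁ + H₂) ≤ R(H₁, K_{1, R(H₁, H₂)}), where K₁ + H₂ is the graph obtained from H₂ by adding one new vertex joined to every vertex of H₂. -/
/-- `G` contains a subgraph isomorphic to `H`, i.e. there is an injective map of the
vertices of `H` into the vertices of `G` preserving adjacency. -/
def SimpleGraph.ContainsCopy {V W : Type*} (G : SimpleGraph V) (H : SimpleGraph W) : Prop :=
  ∃ f : W ↪ V, ∀ ⦃a b : W⦄, H.Adj a b → G.Adj (f a) (f b)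

/-- The Ramsey number `R(H₁, H₂)`: the least `N` such that every simple graph `G` on `N`
vertices contains a subgraph isomorphic to `H₁`, or its complement contains a subgraph
isomorphic to `H₂`. -/
noncomputable def ramseyNumber {V W : Type*} (H₁ : SimpleGraph V) (H₂ : SimpleGraph W) : ℕ :=
  sInf {N : ℕ | ∀ G : SimpleGraph (Fin N),
    G.ContainsCopy H₁ ∨ Gᶜ.ContainsCopy H₂}

/-- The star `K_{1,n}` on `n + 1` vertices. -/
def starGraph (n : ℕ) : SimpleGraph (Fin 1 ⊕ Fin n) := completeBipartiteGraph (Fin 1) (Fin n)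
/-- The join `K₁ + H`: the graph obtained from `H` by adding one new vertex joined to
every vertex of `H`. -/
def joinOne {W : Type*} (H : SimpleGraph W) : SimpleGraph (Option W) :=
  SimpleGraph.fromRel (fun x y => x = none ∨ ∃ a b, x = some a ∧ y = some b ∧ H.Adj a b)

/-!
Let `r = R(H₁, H₂)`. In a graph on `R(H₁, K_{1,r})` vertices with no copy of `H₁`, the complement
contains a star, i.e. a vertex `c` with `r` non-neighbours. The graph induced on these
non-neighbours either contains `H₁`, or its complement contains `H₂`, and then `c` together with
that copy of `H₂` is a copy of `K₁ + H₂` in the complement.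

Since `ramseyNumber` is an `sInf`, which is `0` on the empty set, the argument needs both Ramsey
numbers to be finite. This is the Erdős–Szekeres induction: if `N₁ → (H₁ - v, H₂)` and
`N₂ → (H₁, H₂ - w)`, then any vertex of a graph on `N₁ + N₂ + 1` vertices has `N₁` neighbours or
`N₂` non-neighbours, and the same join argument gives `N₁ + N₂ + 1 → (H₁, H₂)`.
-/

namespace SimpleGraph

variable {V W X : Type*}

theorem ContainsCopy.trans {G : SimpleGraph X} {H : SimpleGraph V} {K : SimpleGraph W}
    (hGH : G.ContainsCopy H) (hHK : H.ContainsCopy K) : G.ContainsCopy K := by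
  obtain ⟨f, hf⟩ := hGH
  obtain ⟨g, hg⟩ := hHK
  exact ⟨g.trans f, fun _ _ h => hf (hg h)⟩

theorem containsCopy_comap (G : SimpleGraph X) (e : V ↪ X) : G.ContainsCopy (G.comap e) :=
  ⟨e, fun _ _ h => h⟩

theorem containsCopy_of_isEmpty [IsEmpty V] (G : SimpleGraph X) (H : SimpleGraph V) :
    G.ContainsCopy H :=
  ⟨.ofIsEmpty, fun a => isEmptyElim a⟩

abbrev deleteVertex (H : SimpleGraph V) (v : V) : SimpleGraph {u // u ≠ v} :=
  H.comap (Function.Embedding.subtype _)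

theorem comap_compl (G : SimpleGraph X) (e : V ↪ X) : Gᶜ.comap e = (G.comap e)ᶜ := by
  ext a b
  simp

theorem exists_embedding_adj_of_le_degree {G : SimpleGraph X} {x : X}
    [Fintype (G.neighborSet x)] {m : ℕ} (h : m ≤ G.degree x) :
    ∃ e : Fin m ↪ X, ∀ i, G.Adj x (e i) := by
  rw [← card_neighborSet_eq_degree] at h
  obtain ⟨e⟩ := Function.Embedding.nonempty_of_card_le ((Fintype.card_fin m).trans_le h)
  exact ⟨e.trans (.subtype _), fun i => (e i).2⟩

end SimpleGraph

section Join

variable {V W X : Type*} {H : SimpleGraph W}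

@[simp] theorem joinOne_adj_some_some {a b : W} :
    (joinOne H).Adj (some a) (some b) ↔ H.Adj a b := by
  simpa [joinOne, H.adj_comm b a] using fun h => h.ne

@[simp] theorem joinOne_adj_none_some (a : W) : (joinOne H).Adj none (some a) := by
  simp [joinOne]

@[simp] theorem joinOne_adj_some_none (a : W) : (joinOne H).Adj (some a) none := by
  simp [joinOne]

theorem SimpleGraph.ContainsCopy.joinOne_of_forall_adj {K : SimpleGraph X} {x : X} {e : V ↪ X}
    (hx : ∀ v, K.Adj x (e v)) (h : (K.comap e).ContainsCopy H) : K.ContainsCopy (joinOne H) := by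
  obtain ⟨f, hf⟩ := h
  refine ⟨(f.trans e).optionElim x fun ⟨w, hw⟩ => (hx (f w)).ne hw.symm, ?_⟩
  rintro (_ | a) (_ | b) hab
  · exact (hab.ne rfl).elim
  · exact hx _
  · exact (hx _).symm
  · exact hf (joinOne_adj_some_some.mp hab)

theorem joinOne_deleteVertex_containsCopy (H : SimpleGraph V) (v : V) :
    (joinOne (H.deleteVertex v)).ContainsCopy H := by
  classical
  refine ⟨(Equiv.optionSubtypeNe v).symm.toEmbedding, fun a b hab => ?_⟩
  rcases eq_or_ne a v with ha | ha <;> rcases eq_or_ne b v with hb | hb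
  · exact (hab.ne (ha.trans hb.symm)).elim
  · subst ha; simp [Equiv.optionSubtypeNe_symm_of_ne hb]
  · subst hb; simp [Equiv.optionSubtypeNe_symm_of_ne ha]
  · simpa [Equiv.optionSubtypeNe_symm_of_ne ha, Equiv.optionSubtypeNe_symm_of_ne hb] using hab

end Join

theorem exists_forall_adj_of_containsCopy_starGraph {X : Type*} {G : SimpleGraph X} {n : ℕ}
    (h : G.ContainsCopy (starGraph n)) : ∃ (c : X) (e : Fin n ↪ X), ∀ i, G.Adj c (e i) := by
  obtain ⟨f, hf⟩ := h
  exact ⟨f (Sum.inl 0), Function.Embedding.inr.trans f, fun i => hf (by simp [starGraph])⟩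

section Ramsey

variable {V W : Type*} {H₁ : SimpleGraph V} {H₂ : SimpleGraph W} {N : ℕ}

/-- The arrow relation `N → (H₁, H₂)`. -/
def RamseyArrows (N : ℕ) (H₁ : SimpleGraph V) (H₂ : SimpleGraph W) : Prop :=
  ∀ G : SimpleGraph (Fin N), G.ContainsCopy H₁ ∨ Gᶜ.ContainsCopy H₂

theorem RamseyArrows.symm (h : RamseyArrows N H₁ H₂) : RamseyArrows N H₂ H₁ := fun G => by
  simpa only [compl_compl, or_comm] using h Gᶜ

theorem RamseyArrows.containsCopy_or_joinOne {X : Type*} (h : RamseyArrows N H₁ H₂)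
    (G : SimpleGraph X) {x : X} {e : Fin N ↪ X} (he : ∀ i, Gᶜ.Adj x (e i)) :
    G.ContainsCopy H₁ ∨ Gᶜ.ContainsCopy (joinOne H₂) :=
  (h (G.comap e)).imp (G.containsCopy_comap e).trans fun hc =>
    .joinOne_of_forall_adj he (by rwa [SimpleGraph.comap_compl])

theorem RamseyArrows.add_add_one {N₁ N₂ : ℕ} {v : V} {w : W}
    (h₁ : RamseyArrows N₁ (H₁.deleteVertex v) H₂)
    (h₂ : RamseyArrows N₂ H₁ (H₂.deleteVertex w)) :
    RamseyArrows (N₁ + N₂ + 1) H₁ H₂ := by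
  intro G
  classical
  have hdeg : G.degree 0 + Gᶜ.degree 0 = N₁ + N₂ := by
    have hlt := G.degree_lt_card_verts 0
    rw [Fintype.card_fin] at hlt
    rw [G.degree_compl, Fintype.card_fin]
    omega
  rcases le_or_gt N₁ (G.degree 0) with hle | hlt
  · obtain ⟨e, he⟩ := SimpleGraph.exists_embedding_adj_of_le_degree hle
    have := h₁.symm.containsCopy_or_joinOne Gᶜ (x := 0) (e := e) (by simpa using he)
    rw [compl_compl] at this
    exact this.symm.imp_left fun hc => hc.trans (joinOne_deleteVertex_containsCopy H₁ v)
  · obtain ⟨e, he⟩ := SimpleGraph.exists_embedding_adj_of_le_degree (G := Gᶜ) (x := 0) (m := N₂)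
      (by omega)
    exact (h₂.containsCopy_or_joinOne G he).imp_right fun hc =>
      hc.trans (joinOne_deleteVertex_containsCopy H₂ w)

theorem exists_ramseyArrows [Finite V] [Finite W] (H₁ : SimpleGraph V) (H₂ : SimpleGraph W) :
    ∃ N, RamseyArrows N H₁ H₂ := by
  induction hn : Nat.card V + Nat.card W using Nat.strong_induction_on generalizing V W with
  | _ n ih =>
  obtain hV | ⟨⟨v⟩⟩ := isEmpty_or_nonempty V
  · exact ⟨0, fun G => .inl (G.containsCopy_of_isEmpty H₁)⟩
  obtain hW | ⟨⟨w⟩⟩ := isEmpty_or_nonempty W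
  · exact ⟨0, fun G => .inr (Gᶜ.containsCopy_of_isEmpty H₂)⟩
  have hv := Finite.card_subtype_lt (p := fun u : V => u ≠ v) (not_not.2 rfl)
  have hw := Finite.card_subtype_lt (p := fun u : W => u ≠ w) (not_not.2 rfl)
  obtain ⟨N₁, h₁⟩ := ih _ (by omega) (H₁.deleteVertex v) H₂ rfl
  obtain ⟨N₂, h₂⟩ := ih _ (by omega) H₁ (H₂.deleteVertex w) rfl
  exact ⟨_, h₁.add_add_one h₂⟩

theorem ramseyNumber_le (h : RamseyArrows N H₁ H₂) : ramseyNumber H₁ H₂ ≤ N :=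
  Nat.sInf_le h

theorem ramseyArrows_ramseyNumber [Finite V] [Finite W] (H₁ : SimpleGraph V)
    (H₂ : SimpleGraph W) : RamseyArrows (ramseyNumber H₁ H₂) H₁ H₂ :=
  Nat.sInf_mem (exists_ramseyArrows H₁ H₂)

end Ramsey

/-- For all simple graphs `H₁`, `H₂`:  `R(H₁, K₁ + H₂) ≤ R(H₁, K_{1, R(H₁, H₂)})`. -/
theorem ramsey_join_le_ramsey_star {V W : Type} [Fintype V] [Fintype W]
    (H₁ : SimpleGraph V) (H₂ : SimpleGraph W) :
    ramseyNumber H₁ (joinOne H₂) ≤ ramseyNumber H₁ (starGraph (ramseyNumber H₁ H₂)) := by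
  refine ramseyNumber_le fun G => (ramseyArrows_ramseyNumber H₁ _ G).elim .inl fun hstar => ?_
  obtain ⟨c, e, he⟩ := exists_forall_adj_of_containsCopy_starGraph hstar
  exact (ramseyArrows_ramseyNumber H₁ H₂).containsCopy_or_joinOne G he
end

section
/- If n is an even natural number (n ≥ 2) such that ⌈√n⌉ is odd, then R(C₄, K_{1,n}) ≤ n + ⌈√(n − ⌈√n⌉ + 2)⌉ + 1. -/
/-!
Let `q = ⌈√n⌉`, `s = ⌈√(n - q + 2)⌉`, and let `G` on `n + s + 1` vertices be `C₄`-free with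
`K_{1,n}`-free complement. Then every degree is at least `s + 1`, and since two vertices of a
`C₄`-free graph have at most one common neighbour, counting the neighbours of the neighbours of `v`
gives `deg v * (s + 1) ≤ (n + s) + deg v`, i.e. `deg v * s ≤ n + s`. From `(q - 1)² < n ≤ q²`
one gets `s ∈ {q - 1, q}`. If `s = q`, parity gives `n < s²`, against `(s + 1) * s ≤ n + s`. If
`s = q - 1`, the number `(n + s + 1)(s + 1)` is odd, so `G` is not `(s + 1)`-regular, and a
vertex of degree at least `s + 2` forces `s² + s ≤ n`, contradicting `n - q + 2 ≤ s²`.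
-/

open Finset

namespace SimpleGraph

variable {V : Type*} (G : SimpleGraph V)

theorem containsCopy_iff_isContained {W : Type*} {H : SimpleGraph W} :
    G.ContainsCopy H ↔ H ⊑ G :=
  isContained_iff_exists_le_comap.symm

variable [Fintype V] [DecidableRel G.Adj]

theorem containsCopy_starGraph_of_le_degree {n : ℕ} {v : V} (h : n ≤ G.degree v) :
    G.ContainsCopy (_root_.starGraph n) := by
  obtain ⟨t, ht, htn⟩ := exists_subset_card_eq h
  rw [containsCopy_iff_isContained, _root_.starGraph, completeBipartiteGraph_isContained_iff]
  refine ⟨{v}, t, by simp, by simpa using htn, fun u hu w hw => ?_⟩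
  rw [coe_singleton, Set.mem_singleton_iff] at hu
  exact hu ▸ (G.mem_neighborFinset v w).1 (ht hw)

theorem card_inter_neighborFinset_le_one [DecidableEq V]
    (hC : ¬ G.ContainsCopy (cycleGraph 4)) {v w : V} (hvw : v ≠ w) :
    #(G.neighborFinset v ∩ G.neighborFinset w) ≤ 1 := by
  refine card_le_one.2 fun a ha b hb => ?_
  simp only [mem_inter, mem_neighborFinset] at ha hb
  by_contra hab
  refine hC <| (G.containsCopy_iff_isContained).2 <| (cycleGraph_isContained_iff (by norm_num)).2
    ⟨v, .cons ha.1 (.cons ha.2.symm (.cons hb.2 (.cons hb.1.symm .nil))), ?_, rfl⟩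
  simp [Walk.cons_isCycle_iff, Walk.cons_isPath_iff, hvw, hvw.symm, hab, ha.1.ne, ha.1.ne.symm,
    ha.2.ne.symm, hb.1.ne, hb.1.ne.symm, hb.2.ne]

theorem sum_degree_neighborFinset_eq_sum_card_inter [DecidableEq V] (v : V) :
    ∑ u ∈ G.neighborFinset v, G.degree u = ∑ w, #(G.neighborFinset v ∩ G.neighborFinset w) := by
  have := sum_card_bipartiteAbove_eq_sum_card_bipartiteBelow (s := G.neighborFinset v)
    (t := univ) (r := G.Adj)
  convert this using 2 with u _ w
  · rw [← card_neighborFinset_eq_degree, neighborFinset_eq_filter]; rfl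
  · congr 1; ext u; simp [bipartiteBelow, adj_comm]

theorem sum_degree_neighborFinset_le_of_cycleGraph_free
    (hC : ¬ G.ContainsCopy (cycleGraph 4)) (v : V) :
    ∑ u ∈ G.neighborFinset v, G.degree u ≤ Fintype.card V - 1 + G.degree v := by
  classical
  rw [sum_degree_neighborFinset_eq_sum_card_inter, ← add_sum_erase _ _ (mem_univ v), inter_self,
    add_comm, card_neighborFinset_eq_degree]
  gcongr
  calc ∑ w ∈ univ.erase v, #(G.neighborFinset v ∩ G.neighborFinset w)
      ≤ #(univ.erase v) * 1 :=
        sum_le_card_nsmul _ _ _ fun w hw =>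
          G.card_inter_neighborFinset_le_one hC (ne_of_mem_erase hw).symm
    _ = Fintype.card V - 1 := by rw [mul_one, card_erase_of_mem (mem_univ v), card_univ]

theorem degree_mul_le_of_cycleGraph_free (hC : ¬ G.ContainsCopy (cycleGraph 4)) {δ : ℕ}
    (hδ : ∀ u, δ + 1 ≤ G.degree u) (v : V) : G.degree v * δ ≤ Fintype.card V - 1 := by
  have h := (card_nsmul_le_sum _ _ _ fun u _ => hδ u).trans
    (G.sum_degree_neighborFinset_le_of_cycleGraph_free hC v)
  rw [card_neighborFinset_eq_degree, smul_eq_mul, mul_add_one] at h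
  omega

theorem le_degree_of_not_containsCopy_compl_starGraph {n : ℕ}
    (h : ¬ Gᶜ.ContainsCopy (_root_.starGraph n)) (v : V) : Fintype.card V - n ≤ G.degree v := by
  classical
  by_contra! hlt
  refine h (Gᶜ.containsCopy_starGraph_of_le_degree (v := v) ?_)
  rw [degree_compl]
  omega

theorem exists_lt_degree_of_odd {d : ℕ} (hd : ∀ v, d ≤ G.degree v)
    (hodd : Odd (Fintype.card V * d)) : ∃ v, d < G.degree v := by
  by_contra! h
  have hsum : ∑ v, G.degree v = Fintype.card V * d := by
    rw [sum_congr rfl fun v _ => (h v).antisymm (hd v), sum_const, card_univ, smul_eq_mul]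
  rw [← hsum, sum_degrees_eq_twice_card_edges] at hodd
  exact Nat.not_even_iff_odd.2 hodd (even_two_mul _)

end SimpleGraph

theorem Nat.lt_ceil_sqrt_iff {m k : ℕ} : k < ⌈√(m : ℝ)⌉₊ ↔ k ^ 2 < m := by
  rw [Nat.lt_ceil, Real.lt_sqrt (Nat.cast_nonneg k)]
  exact_mod_cast Iff.rfl

theorem Nat.ceil_sqrt_le_iff {m k : ℕ} : ⌈√(m : ℝ)⌉₊ ≤ k ↔ m ≤ k ^ 2 := by
  simpa using Nat.lt_ceil_sqrt_iff.not

theorem ceil_sqrt_sub_add_two_cases {n q s : ℕ} (hne : Even n)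
    (hq : ⌈√(n : ℝ)⌉₊ = q) (hodd : Odd q) (hs : ⌈√((n : ℝ) - q + 2)⌉₊ = s) :
    (s = q ∧ n < s ^ 2) ∨ (s + 1 = q ∧ n < s ^ 2 + s) := by
  have hq_hi : n ≤ q ^ 2 := Nat.ceil_sqrt_le_iff.1 hq.le
  have hn : 0 ^ 2 < n := Nat.lt_ceil_sqrt_iff.1 (hq ▸ hodd.pos)
  have h1q : 1 < q := hq ▸ Nat.lt_ceil_sqrt_iff.2 (by obtain ⟨k, rfl⟩ := hne; omega)
  obtain ⟨r, rfl⟩ : ∃ r, q = r + 3 := ⟨q - 3, by obtain ⟨k, rfl⟩ := hodd; omega⟩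
  have hq_lo : (r + 2) ^ 2 < n := Nat.lt_ceil_sqrt_iff.1 (hq ▸ by omega)
  obtain ⟨m, rfl⟩ := Nat.exists_eq_add_of_le' (show r + 1 ≤ n by nlinarith)
  have hcast : (((m + (r + 1) : ℕ) : ℝ) - ((r + 3 : ℕ) : ℝ) + 2) = (m : ℝ) := by push_cast; ring
  rw [hcast] at hs
  have hs_hi : m ≤ s ^ 2 := Nat.ceil_sqrt_le_iff.1 hs.le
  have hs_le : s ≤ r + 3 := hs ▸ Nat.ceil_sqrt_le_iff.2 (by nlinarith)
  have hs_gt : r + 1 < s := hs ▸ Nat.lt_ceil_sqrt_iff.2 (by nlinarith)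
  obtain rfl | rfl : s = r + 3 ∨ s = r + 2 := by omega
  · refine Or.inl ⟨rfl, hq_hi.lt_of_ne fun h => ?_⟩
    exact Nat.not_even_iff_odd.2 (h ▸ hodd.pow) hne
  · exact Or.inr ⟨rfl, by nlinarith⟩

theorem ramsey_C4_star_le_of_even_general (n : ℕ) (hne : Even n)
    (hodd : Odd ⌈Real.sqrt (n : ℝ)⌉₊) :
    ramseyNumber (SimpleGraph.cycleGraph 4) (starGraph n)
      ≤ n + ⌈Real.sqrt ((n : ℝ) - (⌈Real.sqrt (n : ℝ)⌉₊ : ℝ) + 2)⌉₊ + 1 := by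
  classical
  generalize hq : ⌈√(n : ℝ)⌉₊ = q at hodd ⊢
  generalize hs : ⌈√((n : ℝ) - q + 2)⌉₊ = s
  refine Nat.sInf_le fun G => ?_
  by_contra! ⟨hC, hstar⟩
  have hmin (v : Fin (n + s + 1)) : s + 1 ≤ G.degree v := by
    simpa [show n + s + 1 - n = s + 1 by omega] using
      G.le_degree_of_not_containsCopy_compl_starGraph hstar v
  have hmul (v : Fin (n + s + 1)) : G.degree v * s ≤ n + s := by
    simpa using G.degree_mul_le_of_cycleGraph_free hC hmin v
  rcases ceil_sqrt_sub_add_two_cases hne hq hodd hs with ⟨rfl, hlt⟩ | ⟨rfl, hlt⟩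
  · nlinarith [hmin 0, hmul 0]
  · have hodd_card : Odd (Fintype.card (Fin (n + s + 1)) * (s + 1)) := by
      have hs_even : Even s := Nat.not_odd_iff_even.1 (Nat.odd_add_one.1 hodd)
      simpa using Nat.odd_mul.2 ⟨(hne.add hs_even).add_one, hodd⟩
    obtain ⟨v, hv⟩ := G.exists_lt_degree_of_odd hmin hodd_card
    nlinarith [hmul v]

/-- If `n ≥ 2` is even and `⌈√n⌉` is odd, then
`R(C₄, K_{1,n}) ≤ n + ⌈√(n − ⌈√n⌉ + 2)⌉ + 1`. -/
theorem ramsey_C4_star_le_of_even (n : ℕ) (hn : 2 ≤ n) (hne : Even n)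
    (hodd : Odd ⌈Real.sqrt (n : ℝ)⌉₊) :
    ramseyNumber (SimpleGraph.cycleGraph 4) (starGraph n)
      ≤ n + ⌈Real.sqrt ((n : ℝ) - (⌈Real.sqrt (n : ℝ)⌉₊ : ℝ) + 2)⌉₊ + 1 :=
  ramsey_C4_star_le_of_even_general n hne hodd
end

section
/- If m is a natural number with m ≡ 2 (mod 6) and m ≥ 8, then R(C₄, K_{1, m²+3}) ≤ m² + m + 4. -/
/-!
In a `C₄`-free graph two distinct vertices have at most one common neighbour. Suppose such a
graph on `m² + m + 4` vertices had minimum degree greater than `m`. For each vertex `a` the sets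
`N(u) \ {a}`, `u ∈ N(a)`, are disjoint, which forces the graph to be `(m + 1)`-regular with exactly
three vertices outside `{a} ∪ ⋃ N(u)`. The neighbourhood of `a` spans a matching whose unmatched
vertices are among those three, so by parity it covers `m` or `m - 2` vertices. Summing over `a`
counts ordered triangles, a multiple of `3`; as `m ≡ 2 (mod 6)`, some vertex `v` covers only
`m - 2`, and then every vertex is within distance two of `v`. For an edge `uu'` inside `N(v)`
this makes the `m - 1` vertices of `N(u') \ {u, v}` span a perfect matching, impossible since
`m - 1` is odd. So some vertex has degree at most `m`, and its `m² + 3` non-neighbours form a star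
in the complement.
-/

open Finset

theorem Finset.card_modEq_zero_of_iterate_eq_self {α : Type*} {s : Finset α} {p : ℕ}
    [Fact p.Prime] {f : α → α} (hs : ∀ x ∈ s, f x ∈ s) (hp : ∀ x ∈ s, f^[p] x = x)
    (hf : ∀ x ∈ s, f x ≠ x) : #s ≡ 0 [MOD p] := by
  classical
  let g : Function.End s := fun x => ⟨f x, hs x x.2⟩
  have hg (n : ℕ) (x : s) : ((g ^ n : Function.End s) x : α) = f^[n] x := by
    induction n with
    | zero => rfl
    | succ n ih => rw [pow_succ', Function.iterate_succ_apply', ← ih]; rfl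
  have h := Equiv.Perm.card_fixedPoints_modEq (f := g) (n := 1) (by
    rw [pow_one]; funext x; exact Subtype.ext ((hg p x).trans (hp x x.2)))
  have : IsEmpty (Function.fixedPoints g) := ⟨fun ⟨x, hx⟩ => hf x x.2 (congrArg Subtype.val hx)⟩
  simpa using h

namespace SimpleGraph

variable {V : Type*} {G : SimpleGraph V}

variable (G) in
def CommonNeighborsSubsingleton : Prop :=
  Pairwise fun a b => (G.commonNeighbors a b).Subsingleton

namespace CommonNeighborsSubsingleton

variable (hG : G.CommonNeighborsSubsingleton)
include hG

lemma eq_or_eq {a b c d : V} (hac : G.Adj a c) (had : G.Adj a d) (hbc : G.Adj b c)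
    (hbd : G.Adj b d) : a = b ∨ c = d :=
  or_iff_not_imp_left.2 fun hab => hG hab ⟨hac, hbc⟩ ⟨had, hbd⟩

lemma not_adj_of_adj_of_adj_of_adj {a b c d : V} (hab : G.Adj a b) (hbc : G.Adj b c)
    (hcd : G.Adj c d) (hca : c ≠ a) (hdb : d ≠ b) : ¬ G.Adj a d := fun had =>
  (hG.eq_or_eq hab had hbc.symm hcd).elim (fun h => hca h.symm) (fun h => hdb h.symm)

end CommonNeighborsSubsingleton

lemma containsCopy_cycleGraph_four (hG : ¬ G.CommonNeighborsSubsingleton) :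
    G.ContainsCopy (cycleGraph 4) := by
  simp only [CommonNeighborsSubsingleton, Pairwise, Set.Subsingleton, mem_commonNeighbors,
    not_forall] at hG
  obtain ⟨a, b, hab, c, ⟨hac, hbc⟩, d, ⟨had, hbd⟩, hcd⟩ := hG
  have := hac.ne; have := hbc.ne; have := had.ne; have := hbd.ne
  have hinj : Function.Injective ![a, c, b, d] := by
    intro i j hij
    fin_cases i <;> fin_cases j <;> simp_all [eq_comm]
  refine ⟨⟨_, hinj⟩, fun i j hij => ?_⟩
  show G.Adj (![a, c, b, d] i) (![a, c, b, d] j)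
  fin_cases i <;> fin_cases j
  all_goals first
    | exact absurd hij (by decide)
    | simp [adj_comm, *]

lemma containsCopy_starGraph [Fintype V] [DecidableRel G.Adj] {n : ℕ} (v : V)
    (hn : n ≤ G.degree v) : G.ContainsCopy (_root_.starGraph n) := by
  obtain ⟨t, ht, htn⟩ := exists_subset_card_eq hn
  have hvt : v ∉ t := fun h => G.irrefl ((mem_neighborFinset G v v).1 (ht h))
  let e := (t.equivFinOfCardEq htn).symm
  refine ⟨⟨Sum.elim (fun _ : Fin 1 => v) (fun i : Fin n => (e i : V)), ?_⟩, ?_⟩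
  · refine (Function.injective_of_subsingleton _).sumElim
      (Subtype.val_injective.comp e.injective) fun _ i => ?_
    exact fun h => hvt (h ▸ (e i).2)
  · rintro (i | i) (j | j) hij <;> simp [_root_.starGraph] at hij
    · exact (mem_neighborFinset G v _).1 (ht (e j).2)
    · exact ((mem_neighborFinset G v _).1 (ht (e i).2)).symm

lemma even_card_of_existsUnique_adj {s : Finset V} (hs : ∀ y ∈ s, ∃! z, z ∈ s ∧ G.Adj y z) :
    Even #s := by
  choose! g hg hg_unique using hs
  refine Nat.even_iff.2 (card_modEq_zero_of_iterate_eq_self (p := 2) (fun y hy => (hg y hy).1)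
    (fun y hy => ?_) (fun y hy => (hg y hy).2.ne'))
  exact (hg_unique (g y) (hg y hy).1 y ⟨hy, (hg y hy).2.symm⟩).symm

section Finite

variable [Fintype V] [DecidableRel G.Adj]

variable (G) in
def linkDarts (a : V) : Finset (V × V) := {p | G.Adj a p.1 ∧ G.Adj p.1 p.2 ∧ G.Adj p.2 a}

lemma even_card_linkDarts (a : V) : Even #(G.linkDarts a) := by
  refine Nat.even_iff.2 (card_modEq_zero_of_iterate_eq_self (p := 2) (f := Prod.swap) ?_
    (fun _ _ => rfl) ?_)
  · simp only [linkDarts, mem_filter, mem_univ, true_and, Prod.fst_swap, Prod.snd_swap]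
    exact fun p ⟨h₁, h₂, h₃⟩ => ⟨h₃.symm, h₂.symm, h₁.symm⟩
  · simp only [linkDarts, mem_filter, mem_univ, true_and]
    exact fun p ⟨_, h, _⟩ hp => h.ne (congrArg Prod.snd hp)

lemma three_dvd_sum_card_linkDarts : 3 ∣ ∑ a, #(G.linkDarts a) := by
  let T : Finset (V × V × V) := {t | G.Adj t.1 t.2.1 ∧ G.Adj t.2.1 t.2.2 ∧ G.Adj t.2.2 t.1}
  have hT : #T = ∑ a, #(G.linkDarts a) := by
    simp only [T, linkDarts, card_filter, Fintype.sum_prod_type]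
  rw [← hT, ← Nat.modEq_zero_iff_dvd]
  refine card_modEq_zero_of_iterate_eq_self (p := 3) (f := fun t => (t.2.1, t.2.2, t.1)) ?_
    (fun _ _ => rfl) ?_
  · simp only [T, mem_filter, mem_univ, true_and]
    exact fun t ⟨h₁, h₂, h₃⟩ => ⟨h₂, h₃, h₁⟩
  · simp only [T, mem_filter, mem_univ, true_and]
    exact fun t ⟨h, _, _⟩ ht => h.ne (congrArg Prod.fst ht).symm

variable [DecidableEq V]

variable (G) in
def secondNeighborFinset (a : V) : Finset V :=
  (G.neighborFinset a).biUnion fun u => (G.neighborFinset u).erase a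

lemma mem_secondNeighborFinset {a w : V} :
    w ∈ G.secondNeighborFinset a ↔ w ≠ a ∧ ∃ u, G.Adj a u ∧ G.Adj u w := by
  simp only [secondNeighborFinset, mem_biUnion, mem_erase, mem_neighborFinset]
  tauto

lemma self_notMem_secondNeighborFinset (a : V) : a ∉ G.secondNeighborFinset a := by
  simp [mem_secondNeighborFinset]

namespace CommonNeighborsSubsingleton

variable (hG : G.CommonNeighborsSubsingleton)
include hG

lemma card_secondNeighborFinset (a : V) :
    #(G.secondNeighborFinset a) = ∑ u ∈ G.neighborFinset a, (G.degree u - 1) := by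
  rw [secondNeighborFinset, card_biUnion]
  · refine sum_congr rfl fun u hu => ?_
    rw [card_erase_of_mem (by simpa [adj_comm] using hu), card_neighborFinset_eq_degree]
  · intro u hu u' hu' huu'
    rw [Function.onFun, Finset.disjoint_left]
    intro w hw hw'
    simp only [mem_erase, mem_neighborFinset] at hw hw'
    obtain ⟨⟨hwa, huw⟩, ⟨-, hu'w⟩⟩ := And.intro hw hw'
    simp only [coe_neighborFinset, mem_neighborSet] at hu hu'
    exact (hG.eq_or_eq hu.symm huw hu'.symm hu'w).elim huu' (fun h => hwa h.symm)

lemma card_linkDarts (a : V) :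
    #(G.linkDarts a) = #(G.neighborFinset a ∩ G.secondNeighborFinset a) := by
  refine card_bij (fun p _ => p.1) ?_ ?_ ?_
  · simp only [linkDarts, mem_filter, mem_univ, true_and, mem_inter, mem_neighborFinset,
      mem_secondNeighborFinset]
    exact fun p ⟨h₁, h₂, h₃⟩ => ⟨h₁, h₁.ne', p.2, h₃.symm, h₂.symm⟩
  · simp only [linkDarts, mem_filter, mem_univ, true_and]
    rintro ⟨u, w⟩ ⟨hau, huw, hwa⟩ ⟨u', w'⟩ ⟨-, hu'w', hw'a⟩ (rfl : u = u')
    exact Prod.ext rfl ((hG.eq_or_eq huw hu'w' hwa.symm hw'a.symm).resolve_left hau.ne')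
  · simp only [mem_inter, mem_neighborFinset, mem_secondNeighborFinset, linkDarts, mem_filter,
      mem_univ, true_and]
    rintro u ⟨hau, -, w, haw, hwu⟩
    exact ⟨(u, w), ⟨hau, hwu.symm, haw.symm⟩, rfl⟩

lemma isRegularOfDegree {m : ℕ} (hV : Fintype.card V ≤ m ^ 2 + m + 4) (hm : 4 ≤ m)
    (hdeg : ∀ v, m < G.degree v) : G.IsRegularOfDegree (m + 1) := by
  intro a
  have hlow : G.degree a * m ≤ #(G.secondNeighborFinset a) := by
    rw [hG.card_secondNeighborFinset, ← card_neighborFinset_eq_degree, ← smul_eq_mul,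
      ← sum_const]
    exact sum_le_sum fun u _ => by have := hdeg u; omega
  have hup : #(G.secondNeighborFinset a) < Fintype.card V :=
    card_lt_univ_of_notMem (G.self_notMem_secondNeighborFinset a)
  have := hdeg a
  nlinarith

section Regular

variable {m : ℕ} (hreg : G.IsRegularOfDegree (m + 1)) (hV : Fintype.card V = m ^ 2 + m + 4)
include hreg hV

lemma card_compl_insert_secondNeighborFinset (a : V) :
    #(insert a (G.secondNeighborFinset a))ᶜ = 3 := by
  have hS : #(G.secondNeighborFinset a) = (m + 1) * m := by
    rw [hG.card_secondNeighborFinset, sum_congr rfl fun u _ => by rw [hreg u, Nat.add_sub_cancel],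
      sum_const, card_neighborFinset_eq_degree, hreg a, smul_eq_mul]
  rw [card_compl, card_insert_of_notMem (G.self_notMem_secondNeighborFinset a), hS, hV]
  ring_nf
  omega

lemma card_linkDarts_eq_or (hm : Even m) (a : V) :
    #(G.linkDarts a) = m ∨ (#(G.linkDarts a) = m - 2 ∧
      ∀ w, w ≠ a → ¬ G.Adj a w → ∃ u, G.Adj a u ∧ G.Adj u w) := by
  -- `L` is the set of neighbours of `a` in no triangle through `a`; `#L` is odd by parity.
  set L := G.neighborFinset a \ G.secondNeighborFinset a
  have hL : L ⊆ (insert a (G.secondNeighborFinset a))ᶜ := by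
    intro u hu
    simp only [L, mem_sdiff, mem_neighborFinset] at hu
    simp [hu.1.ne', hu.2]
  have hsum : #(G.linkDarts a) + #L = m + 1 := by
    rw [hG.card_linkDarts, card_inter_add_card_sdiff, card_neighborFinset_eq_degree, hreg a]
  have hL3 := card_le_card hL
  rw [hG.card_compl_insert_secondNeighborFinset hreg hV] at hL3
  obtain ⟨k, hk⟩ := G.even_card_linkDarts a
  obtain ⟨j, rfl⟩ := hm
  rcases (by omega : #L = 1 ∨ #L = 3) with hL1 | hL3'
  · exact .inl (by omega)
  refine .inr ⟨by omega, fun w hwa haw => ?_⟩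
  have hLeq : L = (insert a (G.secondNeighborFinset a))ᶜ := eq_of_subset_of_card_le hL (by
    rw [hL3', hG.card_compl_insert_secondNeighborFinset hreg hV])
  by_contra hno
  have hw : w ∈ (insert a (G.secondNeighborFinset a))ᶜ := by
    simp [mem_secondNeighborFinset, hwa, hno]
  rw [← hLeq] at hw
  exact haw (mem_neighborFinset G a w |>.1 (mem_sdiff.1 hw).1)

lemma exists_card_linkDarts_eq_sub_two (hm : m % 6 = 2) :
    ∃ a, #(G.linkDarts a) = m - 2 ∧ ∀ w, w ≠ a → ¬ G.Adj a w → ∃ u, G.Adj a u ∧ G.Adj u w := by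
  by_contra! hno
  have hall (a : V) : #(G.linkDarts a) = m := by
    refine (hG.card_linkDarts_eq_or hreg hV ⟨m / 2, by omega⟩ a).resolve_right ?_
    rintro ⟨h, hcommon⟩
    obtain ⟨w, hwa, haw, hnot⟩ := hno a h
    obtain ⟨u, hau, huw⟩ := hcommon w hwa haw
    exact hnot u hau huw
  have h3 := G.three_dvd_sum_card_linkDarts
  rw [sum_congr rfl fun a _ => hall a, sum_const, card_univ, hV, smul_eq_mul,
    Nat.dvd_iff_mod_eq_zero, Nat.mul_mod, Nat.add_mod, Nat.add_mod (m ^ 2), Nat.pow_mod,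
    show m % 3 = 2 by omega] at h3
  norm_num at h3

end Regular

lemma exists_adj_adj_of_forall_exists_adj {d : ℕ} (hreg : G.IsRegularOfDegree d) {v u u' y : V}
    (hvu : G.Adj v u) (hvu' : G.Adj v u') (huu' : G.Adj u u')
    (hv : ∀ w, w ≠ v → ¬ G.Adj v w → ∃ x, G.Adj v x ∧ G.Adj x w)
    (hu'y : G.Adj u' y) (hyv : y ≠ v) (hyu : y ≠ u) :
    ∃ z, G.Adj u' z ∧ G.Adj y z ∧ z ≠ v ∧ z ≠ u := by
  have hvy : ¬ G.Adj v y := hG.not_adj_of_adj_of_adj_of_adj hvu huu' hu'y hvu'.ne' hyu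
  have hfar : ∀ z ∈ (G.neighborFinset y).erase u', z ≠ v ∧ ¬ G.Adj v z := by
    simp only [mem_erase, mem_neighborFinset]
    rintro z ⟨hzu', hyz⟩
    exact ⟨fun h => hvy (h ▸ hyz.symm), hG.not_adj_of_adj_of_adj_of_adj hvu' hu'y hyz hyv hzu'⟩
  -- `g z` is a common neighbour of `v` and `z`. If no neighbour of `y` other than `u'` were
  -- adjacent to `u'`, then `g` would inject the `d - 1` neighbours of `y` other than `u'` into
  -- the `d - 2` neighbours of `v` other than `u` and `u'`.
  choose! g hgv hgz using hv
  by_contra! hno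
  have hmaps : Set.MapsTo g ((G.neighborFinset y).erase u')
      (((G.neighborFinset v).erase u).erase u') := by
    intro z hz
    obtain ⟨hzv, hvz⟩ := hfar z hz
    have hyz : G.Adj y z := (mem_neighborFinset G y z).1 (mem_of_mem_erase hz)
    have hgu : g z ≠ u := fun h => hG.not_adj_of_adj_of_adj_of_adj huu' hu'y hyz hyu
      (ne_of_mem_erase hz) (h ▸ hgz z hzv hvz)
    have hgu' : g z ≠ u' := fun h => hvz (hno z (h ▸ hgz z hzv hvz) hyz hzv ▸ hvu)
    simp only [mem_coe, mem_erase, mem_neighborFinset]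
    exact ⟨hgu', hgu, hgv z hzv hvz⟩
  have hcard : #(((G.neighborFinset v).erase u).erase u') < #((G.neighborFinset y).erase u') := by
    have h₁ := card_erase_add_one (mem_erase.2 ⟨huu'.ne', (mem_neighborFinset G v u').2 hvu'⟩)
    have h₂ := card_erase_add_one ((mem_neighborFinset G v u).2 hvu)
    have h₃ := card_erase_add_one ((mem_neighborFinset G y u').2 hu'y.symm)
    rw [card_neighborFinset_eq_degree, hreg] at h₂ h₃
    omega
  obtain ⟨z, hz, z', hz', hne, hgzz'⟩ := exists_ne_map_eq_of_card_lt_of_maps_to hcard hmaps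
  obtain ⟨hzv, hvz⟩ := hfar z hz
  obtain ⟨hz'v, hvz'⟩ := hfar z' hz'
  have hyz : G.Adj y z := (mem_neighborFinset G y z).1 (mem_of_mem_erase hz)
  have hyz' : G.Adj y z' := (mem_neighborFinset G y z').1 (mem_of_mem_erase hz')
  exact hG.not_adj_of_adj_of_adj_of_adj (hgz z hzv hvz) hyz.symm hyz'
    (fun h => hvy (h ▸ hgv z hzv hvz)) hne.symm (hgzz' ▸ hgz z' hz'v hvz')

lemma even_of_isRegularOfDegree {d : ℕ} (hreg : G.IsRegularOfDegree d) {v u u' : V}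
    (hvu : G.Adj v u) (hvu' : G.Adj v u') (huu' : G.Adj u u')
    (hv : ∀ w, w ≠ v → ¬ G.Adj v w → ∃ x, G.Adj v x ∧ G.Adj x w) : Even d := by
  set C := ((G.neighborFinset u').erase v).erase u
  have hC : ∀ y ∈ C, ∃! z, z ∈ C ∧ G.Adj y z := by
    intro y hy
    simp only [C, mem_erase, mem_neighborFinset] at hy
    obtain ⟨hyu, hyv, hu'y⟩ := hy
    obtain ⟨z, hu'z, hyz, hzv, hzu⟩ :=
      hG.exists_adj_adj_of_forall_exists_adj hreg hvu hvu' huu' hv hu'y hyv hyu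
    refine ⟨z, ⟨by simp [C, hzu, hzv, hu'z], hyz⟩, fun z' ⟨hz', hyz'⟩ => ?_⟩
    simp only [C, mem_erase, mem_neighborFinset] at hz'
    exact (hG.eq_or_eq hz'.2.2 hu'z hyz' hyz).resolve_left hu'y.ne
  obtain ⟨k, hk⟩ : Even #C := G.even_card_of_existsUnique_adj hC
  have h₁ := card_erase_add_one (mem_erase.2 ⟨hvu.ne', (mem_neighborFinset G u' u).2 huu'.symm⟩)
  have h₂ := card_erase_add_one ((mem_neighborFinset G u' v).2 hvu'.symm)
  rw [card_neighborFinset_eq_degree, hreg] at h₂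
  simp only [C] at hk
  exact ⟨k + 1, by omega⟩

theorem exists_degree_le {m : ℕ} (hV : Fintype.card V = m ^ 2 + m + 4) (hm : m % 6 = 2)
    (hm8 : 8 ≤ m) : ∃ v, G.degree v ≤ m := by
  by_contra! hdeg
  have hreg := hG.isRegularOfDegree hV.le (by omega) hdeg
  obtain ⟨v, hv, hfar⟩ := hG.exists_card_linkDarts_eq_sub_two hreg hV hm
  obtain ⟨⟨u, u'⟩, huu'⟩ := card_pos.1 (by omega : 0 < #(G.linkDarts v))
  simp only [linkDarts, mem_filter, mem_univ, true_and] at huu'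
  obtain ⟨k, hk⟩ := hG.even_of_isRegularOfDegree hreg huu'.1 huu'.2.2.symm huu'.2.1 hfar
  omega

end CommonNeighborsSubsingleton

end Finite

end SimpleGraph

/-- If `m ≡ 2 (mod 6)` and `m ≥ 8`, then `R(C₄, K_{1, m²+3}) ≤ m² + m + 4`. -/
theorem ramsey_C4_star_sq_add_three (m : ℕ) (hm : m % 6 = 2) (hm8 : 8 ≤ m) :
    ramseyNumber (SimpleGraph.cycleGraph 4) (starGraph (m ^ 2 + 3)) ≤ m ^ 2 + m + 4 := by
  refine Nat.sInf_le fun G => ?_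
  classical
  by_cases hG : G.CommonNeighborsSubsingleton
  · obtain ⟨v, hv⟩ := hG.exists_degree_le (Fintype.card_fin _) hm hm8
    refine .inr (Gᶜ.containsCopy_starGraph v ?_)
    rw [SimpleGraph.degree_compl, Fintype.card_fin]
    omega
  · exact .inl (SimpleGraph.containsCopy_cycleGraph_four hG)
end

section
/- Let m be a natural number with m ≡ 2 (mod 6) and m ≥ 8. If G is a simple graph on m² + m + 4 vertices containing no subgraph isomorphic to C₄ and whose complement contains no subgraph isomorphic to K_{1, m²+3}, then every vertex of G has degree exactly m + 1 (i.e., G is (m+1)-regular). -/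
open Finset

namespace SimpleGraph

variable {V : Type*} {G : SimpleGraph V}

theorem containsCopy_cycleGraph_four_s6 {a b c d : V} (hab : G.Adj a b) (hbc : G.Adj b c)
    (hcd : G.Adj c d) (hda : G.Adj d a) (hac : a ≠ c) (hbd : b ≠ d) :
    G.ContainsCopy (cycleGraph 4) := by
  have hinj : Function.Injective ![a, b, c, d] := by
    intro i j hij
    fin_cases i <;> fin_cases j <;>
      simp_all [hab.ne, hbc.ne, hcd.ne, hda.ne, hab.ne', hbc.ne', hcd.ne', hda.ne', eq_comm]
  refine ⟨⟨_, hinj⟩, fun i j hij => ?_⟩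
  change G.Adj (![a, b, c, d] i) (![a, b, c, d] j)
  fin_cases i <;> fin_cases j <;> simp_all +decide [adj_comm]

theorem card_inter_neighborFinset_le_one_s6 [Fintype V] [DecidableEq V] [DecidableRel G.Adj]
    (hC4 : ¬ G.ContainsCopy (cycleGraph 4)) {u v : V} (huv : u ≠ v) :
    #(G.neighborFinset u ∩ G.neighborFinset v) ≤ 1 := by
  refine card_le_one.2 fun x hx y hy => ?_
  simp only [mem_inter, mem_neighborFinset] at hx hy
  by_contra hxy
  exact hC4 (containsCopy_cycleGraph_four_s6 hx.1 hx.2.symm hy.2 hy.1.symm huv hxy)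

theorem degree_lt_of_not_containsCopy_starGraph [Fintype V] [DecidableRel G.Adj] {k : ℕ}
    (hstar : ¬ G.ContainsCopy (_root_.starGraph k)) (v : V) : G.degree v < k := by
  by_contra! hk
  obtain ⟨f⟩ : Nonempty (Fin k ↪ G.neighborSet v) :=
    Function.Embedding.nonempty_of_card_le (by rwa [Fintype.card_fin, card_neighborSet_eq_degree])
  refine hstar ⟨⟨Sum.elim (fun _ : Fin 1 => v) (fun i => (f i : V)), ?_⟩, ?_⟩
  · exact Function.injective_of_subsingleton _ |>.sumElim
      (Subtype.val_injective.comp f.injective) fun _ i => (f i).2.ne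
  · rintro (a | a) (b | b) hab <;> simp [_root_.starGraph] at hab
    · exact (f b).2
    · exact (f a).2.symm

theorem sum_degree_neighborFinset [Fintype V] [DecidableEq V] [DecidableRel G.Adj] (v : V) :
    ∑ w ∈ G.neighborFinset v, G.degree w = ∑ u, #(G.neighborFinset u ∩ G.neighborFinset v) := by
  have hinter (u : V) :
      G.neighborFinset u ∩ G.neighborFinset v = {w ∈ G.neighborFinset v | G.Adj w u} := by
    ext w; simp [adj_comm, and_comm]
  calc ∑ w ∈ G.neighborFinset v, G.degree w
      = ∑ w ∈ G.neighborFinset v, ∑ u, if G.Adj w u then 1 else 0 := sum_congr rfl fun w _ => by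
        rw [← card_neighborFinset_eq_degree, neighborFinset_eq_filter, card_filter]
    _ = ∑ u, ∑ w ∈ G.neighborFinset v, if G.Adj w u then 1 else 0 := sum_comm
    _ = ∑ u, #(G.neighborFinset u ∩ G.neighborFinset v) := sum_congr rfl fun u _ => by
        rw [hinter, card_filter]

theorem sum_degree_neighborFinset_le [Fintype V] [DecidableEq V] [DecidableRel G.Adj]
    (hC4 : ¬ G.ContainsCopy (cycleGraph 4)) (v : V) :
    ∑ w ∈ G.neighborFinset v, G.degree w ≤ G.degree v + (Fintype.card V - 1) := by
  rw [sum_degree_neighborFinset, ← add_sum_erase _ _ (mem_univ v), inter_self,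
    card_neighborFinset_eq_degree]
  gcongr
  calc ∑ u ∈ univ.erase v, #(G.neighborFinset u ∩ G.neighborFinset v)
      ≤ #(univ.erase v) * 1 := sum_le_card_nsmul _ _ _ fun u hu =>
        card_inter_neighborFinset_le_one_s6 hC4 (ne_of_mem_erase hu)
    _ = Fintype.card V - 1 := by rw [mul_one, card_erase_of_mem (mem_univ v), card_univ]

theorem degree_mul_le_of_forall_le_degree [Fintype V] [DecidableRel G.Adj]
    (hC4 : ¬ G.ContainsCopy (cycleGraph 4)) {δ : ℕ} (hδ : ∀ w, δ ≤ G.degree w) (v : V) :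
    G.degree v * δ ≤ G.degree v + (Fintype.card V - 1) := by
  classical
  calc G.degree v * δ = ∑ _ ∈ G.neighborFinset v, δ := by simp
    _ ≤ ∑ w ∈ G.neighborFinset v, G.degree w := sum_le_sum fun w _ => hδ w
    _ ≤ G.degree v + (Fintype.card V - 1) := sum_degree_neighborFinset_le hC4 v

end SimpleGraph

theorem regular_of_C4_free_star_free_general (m : ℕ) (hm8 : 8 ≤ m)
    (G : SimpleGraph (Fin (m ^ 2 + m + 4)))
    (hC4 : ¬ G.ContainsCopy (SimpleGraph.cycleGraph 4))
    (hstar : ¬ Gᶜ.ContainsCopy (starGraph (m ^ 2 + 3))) :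
    ∀ v, (G.neighborSet v).ncard = m + 1 := by
  classical
  have hmin (v) : m + 1 ≤ G.degree v := by
    have := Gᶜ.degree_lt_of_not_containsCopy_starGraph hstar v
    rw [G.degree_compl, Fintype.card_fin] at this
    omega
  intro v
  have hdeg : G.degree v * (m + 1) ≤ G.degree v + (m ^ 2 + m + 3) := by
    simpa using G.degree_mul_le_of_forall_le_degree hC4 hmin v
  rw [Set.ncard_eq_toFinset_card', Set.toFinset_card, G.card_neighborSet_eq_degree]
  refine le_antisymm ?_ (hmin v)
  by_contra! h
  nlinarith [Nat.mul_le_mul_right m h]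

/-- If `m ≡ 2 (mod 6)`, `m ≥ 8`, and `G` is a graph on `m² + m + 4` vertices with no
copy of `C₄` whose complement has no copy of `K_{1, m²+3}`, then `G` is `(m+1)`-regular. -/
theorem regular_of_C4_free_star_free (m : ℕ) (hm : m % 6 = 2) (hm8 : 8 ≤ m)
    (G : SimpleGraph (Fin (m ^ 2 + m + 4)))
    (hC4 : ¬ G.ContainsCopy (SimpleGraph.cycleGraph 4))
    (hstar : ¬ Gᶜ.ContainsCopy (starGraph (m ^ 2 + 3))) :
    ∀ v, (G.neighborSet v).ncard = m + 1 :=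
  regular_of_C4_free_star_free_general m hm8 G hC4 hstar
end

section
/- Let m be a natural number with m ≡ 2 (mod 6) and m ≥ 8, and let G be an (m+1)-regular simple graph on m² + m + 4 vertices containing no subgraph isomorphic to C₄. Then for every vertex v of G, the number of edges of G with both endpoints in the neighborhood N(v) of v is either m/2 − 1 or m/2. -/
/-!
In a `C₄`-free graph two distinct vertices have at most one common neighbour. Hence `N(v)`
induces a matching, so twice its number `e` of edges is at most `deg v = m + 1`. Count the pairs
`(u, w)` with `u ∈ N(v)` adjacent to `w`: there are `(m + 1)²` of them; `w = v` accounts for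
`m + 1`, the `w ∈ N(v)` for `2e`, and each of the remaining `m² + 2` vertices for at most one.
So `2e ≥ m - 2`, and as `m` is even, `e ∈ {m/2 - 1, m/2}`.
-/

open Finset SimpleGraph

namespace SimpleGraph

variable {V : Type*} {G : SimpleGraph V}

theorem containsCopy_cycleGraph_four_of_mem_commonNeighbors {a b x y : V} (hab : a ≠ b)
    (hxy : x ≠ y) (hx : x ∈ G.commonNeighbors a b) (hy : y ∈ G.commonNeighbors a b) :
    G.ContainsCopy (cycleGraph 4) := by
  rw [mem_commonNeighbors] at hx hy
  obtain ⟨hax, hbx⟩ := hx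
  obtain ⟨hay, hby⟩ := hy
  have hinj : Function.Injective ![a, x, b, y] := by
    intro i j hij
    fin_cases i <;> fin_cases j <;>
      simp_all [hax.ne, hay.ne, hbx.ne, hby.ne, hax.ne', hay.ne', hbx.ne', hby.ne', eq_comm]
  refine ⟨⟨_, hinj⟩, fun i j hij => ?_⟩
  change G.Adj (![a, x, b, y] i) (![a, x, b, y] j)
  fin_cases i <;> fin_cases j <;> first | exact absurd hij (by decide) | simp [adj_comm, *]

theorem commonNeighbors_subsingleton (hG : ¬ G.ContainsCopy (cycleGraph 4)) {a b : V}
    (hab : a ≠ b) : (G.commonNeighbors a b).Subsingleton := fun _ hx _ hy =>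
  by_contra fun hxy => hG (containsCopy_cycleGraph_four_of_mem_commonNeighbors hab hxy hx hy)

section Counting

variable [Fintype V] [DecidableEq V] [DecidableRel G.Adj]

theorem card_neighborFinset_inter_le_one (hG : ¬ G.ContainsCopy (cycleGraph 4))
    {a b : V} (hab : a ≠ b) :
    #(G.neighborFinset a ∩ G.neighborFinset b) ≤ 1 := by
  rw [card_le_one]
  intro x hx y hy
  simp only [mem_inter, mem_neighborFinset] at hx hy
  exact commonNeighbors_subsingleton hG hab hx hy

theorem two_mul_ncard_edgeSet_induce (s : Finset V) :
    2 * (G.induce ↑s).edgeSet.ncard = ∑ u ∈ s, #(G.neighborFinset u ∩ s) := by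
  rw [← coe_edgeFinset, Set.ncard_coe_finset, ← sum_degrees_eq_twice_card_edges,
    sum_subtype (p := (· ∈ s)) _ (fun _ => Iff.rfl)]
  refine Fintype.sum_congr _ _ fun u => ?_
  rw [← card_neighborFinset_eq_degree, ← card_map (.subtype _)]
  congr 1
  ext w
  simp

theorem sum_degree_eq_sum_card_neighborFinset_inter (s : Finset V) :
    ∑ u ∈ s, G.degree u = ∑ w, #(G.neighborFinset w ∩ s) := by
  simp_rw [← card_neighborFinset_eq_degree, neighborFinset_eq_filter]
  refine (sum_card_bipartiteAbove_eq_sum_card_bipartiteBelow (r := G.Adj)).trans ?_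
  refine sum_congr rfl fun w _ => ?_
  congr 1
  ext u
  simp [bipartiteBelow, adj_comm, and_comm]

theorem two_mul_ncard_edgeSet_induce_neighborSet_le_degree
    (hG : ¬ G.ContainsCopy (cycleGraph 4)) (v : V) :
    2 * (G.induce (G.neighborSet v)).edgeSet.ncard ≤ G.degree v := by
  have hedges := two_mul_ncard_edgeSet_induce (G := G) (G.neighborFinset v)
  rw [coe_neighborFinset] at hedges
  rw [hedges, ← card_neighborFinset_eq_degree]
  refine (sum_le_card_nsmul _ _ 1 fun u hu => ?_).trans (by simp)
  exact card_neighborFinset_inter_le_one hG ((mem_neighborFinset _ _ _).1 hu).ne'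

theorem sum_degree_neighborFinset_add_one_le (hG : ¬ G.ContainsCopy (cycleGraph 4)) (v : V) :
    ∑ u ∈ G.neighborFinset v, G.degree u + 1
      ≤ Fintype.card V + 2 * (G.induce (G.neighborSet v)).edgeSet.ncard := by
  have hedges := two_mul_ncard_edgeSet_induce (G := G) (G.neighborFinset v)
  rw [coe_neighborFinset] at hedges
  have hv : v ∉ G.neighborFinset v := by simp
  have hfar : ∑ w ∈ (insert v (G.neighborFinset v))ᶜ, #(G.neighborFinset w ∩ G.neighborFinset v)
      ≤ #(insert v (G.neighborFinset v))ᶜ :=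
    (sum_le_card_nsmul _ _ 1 fun w hw =>
      card_neighborFinset_inter_le_one hG (by rintro rfl; simp at hw)).trans (by simp)
  have hcard := card_compl_add_card (insert v (G.neighborFinset v))
  rw [card_insert_of_notMem hv, card_neighborFinset_eq_degree] at hcard
  rw [sum_degree_eq_sum_card_neighborFinset_inter, ← sum_add_sum_compl (insert v _),
    sum_insert hv, inter_self, card_neighborFinset_eq_degree, ← hedges]
  omega

end Counting

end SimpleGraph

theorem edges_in_neighborhood_general (m : ℕ) (hm : m % 6 = 2)
    (G : SimpleGraph (Fin (m ^ 2 + m + 4)))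
    (hreg : ∀ v, (G.neighborSet v).ncard = m + 1)
    (hC4 : ¬ G.ContainsCopy (SimpleGraph.cycleGraph 4)) :
    ∀ v, ((G.induce (G.neighborSet v)).edgeSet).ncard = m / 2 - 1
      ∨ ((G.induce (G.neighborSet v)).edgeSet).ncard = m / 2 := by
  classical
  intro v
  have hdeg (u) : G.degree u = m + 1 := by
    rw [← hreg u, ← card_neighborFinset_eq_degree, ← Set.ncard_coe_finset, coe_neighborFinset]
  have hupper := two_mul_ncard_edgeSet_induce_neighborSet_le_degree hC4 v
  have hlower := sum_degree_neighborFinset_add_one_le hC4 v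
  simp only [hdeg, sum_const, card_neighborFinset_eq_degree, smul_eq_mul, Fintype.card_fin]
    at hupper hlower
  have : m ≤ 2 * (G.induce (G.neighborSet v)).edgeSet.ncard + 2 := by nlinarith
  omega

/-- If `m ≡ 2 (mod 6)`, `m ≥ 8`, and `G` is an `(m+1)`-regular `C₄`-free graph on
`m² + m + 4` vertices, then for every vertex `v` the number of edges with both endpoints
in the neighborhood of `v` is `m/2 − 1` or `m/2`. -/
theorem edges_in_neighborhood (m : ℕ) (hm : m % 6 = 2) (hm8 : 8 ≤ m)
    (G : SimpleGraph (Fin (m ^ 2 + m + 4)))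
    (hreg : ∀ v, (G.neighborSet v).ncard = m + 1)
    (hC4 : ¬ G.ContainsCopy (SimpleGraph.cycleGraph 4)) :
    ∀ v, ((G.induce (G.neighborSet v)).edgeSet).ncard = m / 2 - 1
      ∨ ((G.induce (G.neighborSet v)).edgeSet).ncard = m / 2 :=
  edges_in_neighborhood_general m hm G hreg hC4
end

section
/- R(C₄, K_{1,33}) = 40. -/
/-! If the complement of a graph on 40 vertices contains no `K_{1,33}`, every vertex has degree
at least `7`, so there are at least `40 · C(7, 2) = 840` pairs (vertex, pair of its neighbours).
As there are only `C(40, 2) = 780` pairs of vertices, two vertices share a pair of neighbours: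
a `C₄`. Conversely, a suitable Cayley graph on `39` vertices is `6`-regular and `C₄`-free,
and its complement is `32`-regular, hence contains no `K_{1,33}`. -/

open SimpleGraph hiding starGraph
open Finset Fintype

variable {U V W : Type*} {G : SimpleGraph V}

namespace SimpleGraph

lemma ContainsCopy.of_comap {H : SimpleGraph W} (f : U ↪ V) (h : (G.comap f).ContainsCopy H) :
    G.ContainsCopy H :=
  let ⟨g, hg⟩ := h
  ⟨g.trans f, fun _ _ hab => hg hab⟩

lemma compl_comap_of_injective (G : SimpleGraph V) {f : U → V} (hf : f.Injective) :
    (G.comap f)ᶜ = Gᶜ.comap f := by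
  ext a b
  simp [hf.ne_iff]

lemma containsCopy_cycleGraph_four_iff :
    G.ContainsCopy (cycleGraph 4) ↔ ∃ x y z w, x ≠ y ∧ z ≠ w ∧
      G.Adj x z ∧ G.Adj x w ∧ G.Adj y z ∧ G.Adj y w := by
  constructor
  · rintro ⟨f, hf⟩
    refine ⟨f 1, f 3, f 0, f 2, by simp, by simp,
      (hf ?_).symm, hf ?_, hf ?_, (hf ?_).symm⟩ <;> decide
  · rintro ⟨x, y, z, w, hxy, hzw, hxz, hxw, hyz, hyw⟩
    refine ⟨⟨![z, x, w, y], ?_⟩, ?_⟩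
    · have := hxz.ne; have := hxw.ne; have := hyz.ne; have := hyw.ne
      intro a b hab
      fin_cases a <;> fin_cases b <;> simp_all [eq_comm]
    · intro a b hab
      change G.Adj (![z, x, w, y] a) (![z, x, w, y] b)
      fin_cases a <;> fin_cases b
      all_goals first | exact absurd hab (by decide) | simp [adj_comm, *]

lemma not_containsCopy_cycleGraph_four_iff [Fintype V] [DecidableEq V] [DecidableRel G.Adj] :
    ¬ G.ContainsCopy (cycleGraph 4) ↔
      ∀ x y, x ≠ y → #(G.neighborFinset x ∩ G.neighborFinset y) ≤ 1 := by
  simp only [containsCopy_cycleGraph_four_iff, Finset.card_le_one, mem_inter, mem_neighborFinset]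
  grind

end SimpleGraph

lemma containsCopy_starGraph_iff [Fintype V] [DecidableRel G.Adj] {n : ℕ} :
    G.ContainsCopy (starGraph n) ↔ ∃ v, n ≤ G.degree v := by
  constructor
  · rintro ⟨f, hf⟩
    refine ⟨f (.inl 0), ?_⟩
    let leaves : Fin n ↪ G.neighborFinset (f (.inl 0)) :=
      ⟨fun i => ⟨f (.inr i), (mem_neighborFinset ..).2 (hf (by simp [starGraph]))⟩,
        fun i j hij => by simpa using congrArg Subtype.val hij⟩
    simpa only [Fintype.card_fin, Fintype.card_coe, card_neighborFinset_eq_degree]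
      using Fintype.card_le_of_embedding leaves
  · rintro ⟨v, hv⟩
    obtain ⟨leaves⟩ : Nonempty (Fin n ↪ G.neighborFinset v) :=
      Function.Embedding.nonempty_of_card_le
        (by rwa [Fintype.card_fin, Fintype.card_coe, card_neighborFinset_eq_degree])
    have hadj (i : Fin n) : G.Adj v (leaves i) := (G.mem_neighborFinset _ _).1 (leaves i).2
    refine ⟨⟨Sum.elim (fun _ => v) (fun i => leaves i), ?_⟩, ?_⟩
    · exact Function.Injective.sumElim (fun _ _ _ => Subsingleton.elim _ _)
        (Subtype.val_injective.comp leaves.injective) fun _ i => (hadj i).ne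
    · rintro (a | a) (b | b) hab <;> simp [starGraph] at hab
      · exact hadj b
      · exact (hadj a).symm

lemma not_containsCopy_compl_starGraph_of_isRegularOfDegree [Fintype V] [DecidableEq V]
    [DecidableRel G.Adj] {k : ℕ} (hG : G.IsRegularOfDegree k) :
    ¬ Gᶜ.ContainsCopy (starGraph (card V - k)) := by
  rw [containsCopy_starGraph_iff]
  rintro ⟨v, hv⟩
  have := hG v ▸ G.degree_lt_card_verts v
  rw [degree_compl, hG v] at hv
  omega

lemma sum_choose_two_degree_le [Fintype V] [DecidableEq V] [DecidableRel G.Adj]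
    (hG : ∀ x y, x ≠ y → #(G.neighborFinset x ∩ G.neighborFinset y) ≤ 1) :
    ∑ v, (G.degree v).choose 2 ≤ (card V).choose 2 := by
  let cherries := univ.sigma fun v => (G.neighborFinset v).powersetCard 2
  calc ∑ v, (G.degree v).choose 2 = #cherries := by simp [cherries, card_sigma]
    _ ≤ #(univ.powersetCard 2 : Finset (Finset V)) := by
      refine card_le_card_of_injOn Sigma.snd (fun p _ => by simp_all [cherries]) ?_
      rintro ⟨u, s⟩ hu ⟨v, t⟩ hv (rfl : s = t)
      simp only [cherries, coe_sigma, Set.mem_sigma_iff, coe_univ, Set.mem_univ, mem_coe,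
        mem_powersetCard, true_and] at hu hv
      obtain ⟨z, w, hzw, rfl⟩ := card_eq_two.1 hu.2
      have hu' : u ∈ G.neighborFinset z ∩ G.neighborFinset w := by
        simp_all [insert_subset_iff, adj_comm]
      have hv' : v ∈ G.neighborFinset z ∩ G.neighborFinset w := by
        simp_all [insert_subset_iff, adj_comm]
      rw [card_le_one.1 (hG z w hzw) u hu' v hv']
    _ = (card V).choose 2 := by simp

theorem containsCopy_cycleGraph_four_or_compl_starGraph [Fintype V] (G : SimpleGraph V) {m : ℕ}
    (h : (card V).choose 2 < card V * (card V - m).choose 2) :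
    G.ContainsCopy (cycleGraph 4) ∨ Gᶜ.ContainsCopy (starGraph m) := by
  classical
  by_contra! ⟨hC₄, hstar⟩
  have hdeg (v : V) : card V - m ≤ G.degree v := by
    have hcompl : Gᶜ.degree v < m :=
      not_le.1 fun hv => hstar (containsCopy_starGraph_iff.2 ⟨v, hv⟩)
    have := G.degree_lt_card_verts v
    rw [degree_compl] at hcompl
    omega
  refine h.not_ge ?_
  calc card V * (card V - m).choose 2 = ∑ _v : V, (card V - m).choose 2 := by simp
    _ ≤ ∑ v, (G.degree v).choose 2 := sum_le_sum fun v _ => Nat.choose_le_choose 2 (hdeg v)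
    _ ≤ (card V).choose 2 := sum_choose_two_degree_le (not_containsCopy_cycleGraph_four_iff.1 hC₄)

lemma ramseyNumber_eq_succ {H₁ : SimpleGraph V} {H₂ : SimpleGraph W} {N : ℕ}
    (hN : ∀ G : SimpleGraph (Fin (N + 1)), G.ContainsCopy H₁ ∨ Gᶜ.ContainsCopy H₂)
    [Fintype U] (hU : card U = N) (G₀ : SimpleGraph U)
    (h₁ : ¬ G₀.ContainsCopy H₁) (h₂ : ¬ G₀ᶜ.ContainsCopy H₂) :
    ramseyNumber H₁ H₂ = N + 1 := by
  refine le_antisymm (Nat.sInf_le hN) (le_csInf ⟨_, hN⟩ fun n hn => ?_)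
  by_contra! hnN
  let f : Fin n ↪ U :=
    (Fin.castLEEmb (Nat.le_of_lt_succ hnN)).trans (Fintype.equivFinOfCardEq hU).symm.toEmbedding
  rcases hn (G₀.comap f) with h | h
  · exact h₁ (h.of_comap f)
  · rw [compl_comap_of_injective _ f.injective] at h
    exact h₂ (h.of_comap f)

/-- The Cayley graph of `ℤ/13 ⋊ ℤ/3`, where `ℤ/3` acts by multiplication by `3` (which has order
`3` modulo `13`), with respect to the generators `(1, 0)`, `(0, 1)` and `(5, 1)`: right
multiplication by them sends `(a, i)` to `(a + 3^i, i)`, `(a, i + 1)` and `(a + 5·3^i, i + 1)`. -/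
def cayley39 : SimpleGraph (ZMod 13 × ZMod 3) :=
  SimpleGraph.fromRel fun p q =>
    q = (p.1 + 3 ^ p.2.val, p.2) ∨ q = (p.1, p.2 + 1) ∨ q = (p.1 + 5 * 3 ^ p.2.val, p.2 + 1)

instance : DecidableRel cayley39.Adj := fun _ _ => inferInstanceAs (Decidable (_ ∧ _))

lemma cayley39_isRegularOfDegree : cayley39.IsRegularOfDegree 6 := by
  unfold IsRegularOfDegree
  decide +kernel

lemma cayley39_card_inter_neighborFinset_le_one :
    ∀ x y, x ≠ y → #(cayley39.neighborFinset x ∩ cayley39.neighborFinset y) ≤ 1 := by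
  decide +kernel

/-- `R(C₄, K_{1,33}) = 40`. -/
theorem ramsey_C4_star_33 :
    ramseyNumber (SimpleGraph.cycleGraph 4) (starGraph 33) = 40 :=
  ramseyNumber_eq_succ (N := 39)
    (fun G => containsCopy_cycleGraph_four_or_compl_starGraph G (by decide))
    (by simp [ZMod.card]) cayley39
    (not_containsCopy_cycleGraph_four_iff.2 cayley39_card_inter_neighborFinset_le_one)
    (not_containsCopy_compl_starGraph_of_isRegularOfDegree cayley39_isRegularOfDegree)
end

section
/- Let a and b be integers with a ≥ 1 and 1 ≤ b ≤ a − 1. Then every simple graph on 4a² + 2b + 2a + 1 vertices that contains no subgraph isomorphic to C₄ has a vertex of degree at most 2a (i.e., there is no C₄-free graph on 4a² + 2b + 2a + 1 vertices with minimum degree at least 2a + 1). -/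
/-!
Suppose every vertex had degree at least `2a + 1`. In a `C₄`-free graph the neighbourhoods
`N(u) \ {v}` of the neighbours `u` of a vertex `v` are pairwise disjoint, so
`deg v · 2a ≤ n - 1 = 4a² + 2a + 2b`. As `b < a`, this forces `deg v = 2a + 1` for every `v`:
the graph would be regular of odd degree on an odd number of vertices, contradicting the
handshake lemma.
-/

open SimpleGraph Finset

namespace SimpleGraph

variable {V : Type*} (G : SimpleGraph V)

lemma containsCopy_cycleGraph_four_s19 {v x w y : V} (hvx : G.Adj v x) (hxw : G.Adj x w)
    (hwy : G.Adj w y) (hyv : G.Adj y v) (hvw : v ≠ w) (hxy : x ≠ y) :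
    G.ContainsCopy (cycleGraph 4) := by
  refine ⟨⟨![v, x, w, y], ?_⟩, ?_⟩
  · have := hvx.ne; have := hxw.ne; have := hwy.ne; have := hyv.ne
    intro i j hij
    fin_cases i <;> fin_cases j <;> simp_all [eq_comm]
  · intro i j hij
    change G.Adj (![v, x, w, y] i) (![v, x, w, y] j)
    fin_cases i <;> fin_cases j <;> revert hij <;>
      simp +decide [hvx, hxw, hwy, hyv, hvx.symm, hxw.symm, hwy.symm, hyv.symm]

variable [Fintype V] [DecidableEq V] [DecidableRel G.Adj]

lemma sum_degree_sub_one_le_of_not_containsCopy_cycleGraph_four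
    (hC4 : ¬ G.ContainsCopy (cycleGraph 4)) (v : V) :
    ∑ u ∈ G.neighborFinset v, (G.degree u - 1) ≤ Fintype.card V - 1 := by
  have hcard : ∀ u ∈ G.neighborFinset v, ((G.neighborFinset u).erase v).card = G.degree u - 1 :=
    fun u hu ↦ card_erase_of_mem (by simpa [adj_comm] using hu)
  have hdisj :
      (G.neighborFinset v : Set V).PairwiseDisjoint fun u ↦ (G.neighborFinset u).erase v := by
    intro u hu u' hu' huu'
    refine Finset.disjoint_left.mpr fun x hx hx' ↦ hC4 ?_
    simp only [coe_neighborFinset, mem_neighborSet, mem_erase, mem_neighborFinset] at hu hu' hx hx'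
    exact G.containsCopy_cycleGraph_four_s19 hu hx.2 hx'.2.symm hu'.symm (Ne.symm hx.1) huu'
  calc ∑ u ∈ G.neighborFinset v, (G.degree u - 1)
      = ((G.neighborFinset v).biUnion fun u ↦ (G.neighborFinset u).erase v).card := by
        rw [card_biUnion hdisj, sum_congr rfl hcard]
    _ ≤ (univ.erase v).card := card_le_card fun x hx ↦ by
        simp only [mem_biUnion, mem_erase] at hx
        obtain ⟨u, -, hxv, -⟩ := hx
        exact mem_erase.mpr ⟨hxv, mem_univ x⟩
    _ = Fintype.card V - 1 := card_erase_of_mem (mem_univ v)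

lemma degree_mul_le_of_not_containsCopy_cycleGraph_four
    (hC4 : ¬ G.ContainsCopy (cycleGraph 4)) {δ : ℕ} (hδ : ∀ u, δ ≤ G.degree u) (v : V) :
    G.degree v * (δ - 1) ≤ Fintype.card V - 1 :=
  calc G.degree v * (δ - 1) = ∑ _u ∈ G.neighborFinset v, (δ - 1) := by simp
    _ ≤ ∑ u ∈ G.neighborFinset v, (G.degree u - 1) :=
        sum_le_sum fun u _ ↦ Nat.sub_le_sub_right (hδ u) 1
    _ ≤ Fintype.card V - 1 := G.sum_degree_sub_one_le_of_not_containsCopy_cycleGraph_four hC4 v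

omit [DecidableEq V] in
lemma even_card_of_forall_odd_degree (h : ∀ v, Odd (G.degree v)) : Even (Fintype.card V) := by
  simpa [h] using G.even_card_odd_degree_vertices

end SimpleGraph

theorem exists_low_degree_vertex_of_C4_free_general (a b : ℕ) (ha : 1 ≤ a)
    (hb2 : b ≤ a - 1)
    (G : SimpleGraph (Fin (4 * a ^ 2 + 2 * b + 2 * a + 1)))
    (hC4 : ¬ G.ContainsCopy (SimpleGraph.cycleGraph 4)) :
    ∃ v, (G.neighborSet v).ncard ≤ 2 * a := by
  classical
  by_contra! hdeg
  simp only [← G.coe_neighborFinset, Set.ncard_coe_finset, card_neighborFinset_eq_degree] at hdeg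
  have hreg : ∀ v, G.degree v = 2 * a + 1 := fun v ↦ by
    have hbound :=
      G.degree_mul_le_of_not_containsCopy_cycleGraph_four hC4 (δ := 2 * a + 1) hdeg v
    rw [Fintype.card_fin, Nat.add_sub_cancel, Nat.add_sub_cancel] at hbound
    have hba : b < a := by omega
    by_contra hne
    have : (2 * a + 2) * (2 * a) ≤ G.degree v * (2 * a) :=
      Nat.mul_le_mul_right _ (by have := hdeg v; omega)
    nlinarith
  have heven := G.even_card_of_forall_odd_degree fun v ↦ ⟨a, hreg v⟩
  rw [Fintype.card_fin] at heven
  exact Nat.not_even_iff_odd.mpr ⟨2 * a ^ 2 + b + a, by ring⟩ heven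

/-- For integers `a ≥ 1` and `1 ≤ b ≤ a − 1`, every `C₄`-free graph on
`4a² + 2b + 2a + 1` vertices has a vertex of degree at most `2a`. -/
theorem exists_low_degree_vertex_of_C4_free (a b : ℕ) (ha : 1 ≤ a) (hb1 : 1 ≤ b)
    (hb2 : b ≤ a - 1)
    (G : SimpleGraph (Fin (4 * a ^ 2 + 2 * b + 2 * a + 1)))
    (hC4 : ¬ G.ContainsCopy (SimpleGraph.cycleGraph 4)) :
    ∃ v, (G.neighborSet v).ncard ≤ 2 * a :=
  exists_low_degree_vertex_of_C4_free_general a b ha hb2 G hC4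
end
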